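/- Assume μ and ν are probability measures on 𝒴 satisfying the marginal normalization conditions ∫ ξ(y₁, y₂) dμ(y₁) = 1 for every y₂ ∈ 𝒴 and ∫ ξ(y₁, y₂) dν(y₂) = 1 for every y₁ ∈ 𝒴. Then for all balanced finite signed measures γ¹, γ² on 𝒴 and all t ∈ ℝ: D(μ + tγ¹, ν + tγ²) = D(μ, ν) + t · (∫ φ₁ dγ¹ + ∫ φ₀ dγ²) − t² ε ∫∫ ξ(y₁, y₂) dγ¹(y₁) dγ²(y₂). -/

import Mathlib

open MeasureTheory

/-- Integration of a real-valued function against a finite signed measure, defined as the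
difference of the integrals against the positive and negative parts of its Jordan
decomposition. -/
noncomputable def signedIntegral {𝒴 : Type*} [MeasurableSpace 𝒴]
    (γ : SignedMeasure 𝒴) (f : 𝒴 → ℝ) : ℝ :=
  (∫ y, f y ∂γ.toJordanDecomposition.posPart) - ∫ y, f y ∂γ.toJordanDecomposition.negPart

/-- The Gibbs density `ξ(y₁, y₂) = exp((φ₁(y₁) + φ₀(y₂) − c(y₁, y₂))/ε)`. -/
noncomputable def gibbsDensity {𝒴 : Type*} (ε : ℝ) (φ₁ φ₀ : 𝒴 → ℝ) (c : 𝒴 × 𝒴 → ℝ)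
    (y₁ y₂ : 𝒴) : ℝ :=
  Real.exp ((φ₁ y₁ + φ₀ y₂ - c (y₁, y₂)) / ε)

/-- The entropic dual functional
`D(α, β) = ∫ φ₁ dα + ∫ φ₀ dβ − ε ∫∫ ξ(y₁, y₂) dα(y₁) dβ(y₂) + ε`
on pairs of finite signed measures. -/
noncomputable def entropicDual {𝒴 : Type*} [MeasurableSpace 𝒴]
    (ε : ℝ) (φ₁ φ₀ : 𝒴 → ℝ) (c : 𝒴 × 𝒴 → ℝ) (α β : SignedMeasure 𝒴) : ℝ :=
  signedIntegral α φ₁ + signedIntegral β φ₀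
    - ε * signedIntegral α (fun y₁ => signedIntegral β (fun y₂ =>
        gibbsDensity ε φ₁ φ₀ c y₁ y₂)) + ε

/-!
Integration against a signed measure is linear in the measure, so both arguments of `D` can be
expanded in `t`. The marginal conditions make the inner integral `∫ ξ(y₁, ·) d(ν + tγ₂)` equal to
`1 + t g(y₁)` with `g(y₁) = ∫ ξ(y₁, ·) dγ₂`, and by Fubini `∫ g dμ = ∫ (∫ ξ dμ) dγ₂ = γ₂(𝒴) = 0`.
Since `γ₁` is balanced it also kills the constant `1`, which leaves only the `t²` cross term.
-/

section SignedIntegral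

variable {𝒴 : Type*} [MeasurableSpace 𝒴]

lemma integrable_of_abs_le {α : Type*} [MeasurableSpace α] {f : α → ℝ} {C : ℝ}
    (hf : StronglyMeasurable f) (hC : ∀ x, |f x| ≤ C) (κ : Measure α) [IsFiniteMeasure κ] :
    Integrable f κ :=
  .of_bound hf.aestronglyMeasurable C (ae_of_all _ hC)

lemma signedIntegral_eq_integral_sub_integral {γ : SignedMeasure 𝒴} {μ₁ μ₂ : Measure 𝒴}
    [IsFiniteMeasure μ₁] [IsFiniteMeasure μ₂] (h : γ = μ₁.toSignedMeasure - μ₂.toSignedMeasure)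
    {f : 𝒴 → ℝ} (hf : ∀ (κ : Measure 𝒴) [IsFiniteMeasure κ], Integrable f κ) :
    signedIntegral γ f = (∫ y, f y ∂μ₁) - ∫ y, f y ∂μ₂ := by
  set p := γ.toJordanDecomposition.posPart
  set n := γ.toJordanDecomposition.negPart
  have hγ : γ = p.toSignedMeasure - n.toSignedMeasure :=
    γ.toSignedMeasure_toJordanDecomposition.symm
  have hmeas : p + μ₂ = μ₁ + n := by
    rw [← Measure.toSignedMeasure_eq_toSignedMeasure_iff, Measure.toSignedMeasure_add,
      Measure.toSignedMeasure_add, ← sub_eq_sub_iff_add_eq_add, ← hγ, h]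
  have hint : (∫ y, f y ∂p) + ∫ y, f y ∂μ₂ = (∫ y, f y ∂μ₁) + ∫ y, f y ∂n := by
    rw [← integral_add_measure (hf p) (hf μ₂), ← integral_add_measure (hf μ₁) (hf n), hmeas]
  rw [signedIntegral]
  linarith

lemma signedIntegral_toSignedMeasure (κ : Measure 𝒴) [IsFiniteMeasure κ] {f : 𝒴 → ℝ}
    (hf : ∀ (κ : Measure 𝒴) [IsFiniteMeasure κ], Integrable f κ) :
    signedIntegral κ.toSignedMeasure f = ∫ y, f y ∂κ := by
  rw [signedIntegral_eq_integral_sub_integral (μ₁ := κ) (μ₂ := 0) (by simp) hf,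
    integral_zero_measure, sub_zero]

lemma signedIntegral_add (α β : SignedMeasure 𝒴) {f : 𝒴 → ℝ}
    (hf : ∀ (κ : Measure 𝒴) [IsFiniteMeasure κ], Integrable f κ) :
    signedIntegral (α + β) f = signedIntegral α f + signedIntegral β f := by
  have hsum : α + β = (α.toJordanDecomposition.posPart + β.toJordanDecomposition.posPart
      : Measure 𝒴).toSignedMeasure - (α.toJordanDecomposition.negPart
      + β.toJordanDecomposition.negPart : Measure 𝒴).toSignedMeasure := by
    rw [Measure.toSignedMeasure_add, Measure.toSignedMeasure_add]
    conv_lhs => rw [← α.toSignedMeasure_toJordanDecomposition,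
      ← β.toSignedMeasure_toJordanDecomposition]
    simp only [JordanDecomposition.toSignedMeasure]
    abel
  rw [signedIntegral_eq_integral_sub_integral hsum hf, integral_add_measure (hf _) (hf _),
    integral_add_measure (hf _) (hf _), signedIntegral, signedIntegral]
  ring

lemma signedIntegral_smul (r : ℝ) (γ : SignedMeasure 𝒴) (f : 𝒴 → ℝ) :
    signedIntegral (r • γ) f = r * signedIntegral γ f := by
  rcases le_or_gt 0 r with hr | hr
  · simp only [signedIntegral, SignedMeasure.toJordanDecomposition_smul_real,
      JordanDecomposition.real_smul_posPart_nonneg _ _ hr,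
      JordanDecomposition.real_smul_negPart_nonneg _ _ hr, integral_smul_nnreal_measure,
      NNReal.smul_def, smul_eq_mul, Real.coe_toNNReal r hr]
    ring
  · simp only [signedIntegral, SignedMeasure.toJordanDecomposition_smul_real,
      JordanDecomposition.real_smul_posPart_neg _ _ hr,
      JordanDecomposition.real_smul_negPart_neg _ _ hr, integral_smul_nnreal_measure,
      NNReal.smul_def, smul_eq_mul, Real.coe_toNNReal (-r) (by linarith)]
    ring

lemma signedIntegral_toSignedMeasure_add_smul (κ : Measure 𝒴) [IsFiniteMeasure κ] (t : ℝ)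
    (γ : SignedMeasure 𝒴) {f : 𝒴 → ℝ}
    (hf : ∀ (κ : Measure 𝒴) [IsFiniteMeasure κ], Integrable f κ) :
    signedIntegral (κ.toSignedMeasure + t • γ) f = (∫ y, f y ∂κ) + t * signedIntegral γ f := by
  rw [signedIntegral_add _ _ hf, signedIntegral_toSignedMeasure κ hf, signedIntegral_smul]

lemma signedIntegral_const (γ : SignedMeasure 𝒴) (a : ℝ) :
    signedIntegral γ (fun _ => a) = γ Set.univ * a := by
  conv_rhs => rw [← γ.toSignedMeasure_toJordanDecomposition]
  rw [signedIntegral, integral_const, integral_const, JordanDecomposition.toSignedMeasure,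
    Measure.toSignedMeasure_sub_apply MeasurableSet.univ]
  simp only [smul_eq_mul, Measure.real]
  ring

lemma signedIntegral_const_add_mul (γ : SignedMeasure 𝒴) (a s : ℝ) {g : 𝒴 → ℝ}
    (hg : ∀ (κ : Measure 𝒴) [IsFiniteMeasure κ], Integrable g κ) :
    signedIntegral γ (fun y => a + s * g y) = γ Set.univ * a + s * signedIntegral γ g := by
  have hsplit : ∀ (κ : Measure 𝒴) [IsFiniteMeasure κ],
      ∫ y, (a + s * g y) ∂κ = (∫ _, a ∂κ) + s * ∫ y, g y ∂κ := fun κ _ => by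
    rw [integral_add (integrable_const a) ((hg κ).const_mul s), integral_const_mul]
  rw [← signedIntegral_const γ a]
  simp only [signedIntegral, hsplit]
  ring

lemma abs_signedIntegral_le (γ : SignedMeasure 𝒴) {f : 𝒴 → ℝ} {C : ℝ} (hC : ∀ y, |f y| ≤ C) :
    |signedIntegral γ f| ≤ C * γ.totalVariation.real Set.univ := by
  have hbound (κ : Measure 𝒴) [IsFiniteMeasure κ] : |∫ y, f y ∂κ| ≤ C * κ.real Set.univ :=
    norm_integral_le_of_norm_le_const (μ := κ) (f := f) (ae_of_all _ hC)
  rw [SignedMeasure.totalVariation, measureReal_add_apply, mul_add]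
  exact (abs_sub _ _).trans (add_le_add (hbound _) (hbound _))

lemma MeasureTheory.StronglyMeasurable.signedIntegral_prod_right {X : Type*} [MeasurableSpace X]
    {f : X → 𝒴 → ℝ} (hf : StronglyMeasurable (Function.uncurry f)) (γ : SignedMeasure 𝒴) :
    StronglyMeasurable fun x => signedIntegral γ (f x) :=
  hf.integral_prod_right'.sub hf.integral_prod_right'

lemma integral_signedIntegral_swap {X : Type*} [MeasurableSpace X] (μ : Measure X)
    [IsFiniteMeasure μ] (γ : SignedMeasure 𝒴) {f : X → 𝒴 → ℝ}
    (hf : ∀ (κ : Measure 𝒴) [IsFiniteMeasure κ], Integrable (Function.uncurry f) (μ.prod κ)) :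
    ∫ x, signedIntegral γ (f x) ∂μ = signedIntegral γ fun y => ∫ x, f x y ∂μ := by
  rw [signedIntegral, ← integral_integral_swap (hf _), ← integral_integral_swap (hf _)]
  exact integral_sub (hf _).integral_prod_left (hf _).integral_prod_left

lemma signedIntegral_signedIntegral_add_smul {X : Type*} [MeasurableSpace X] {ξ : X → 𝒴 → ℝ}
    (hξm : StronglyMeasurable (Function.uncurry ξ)) {K : ℝ} (hK : ∀ x y, |ξ x y| ≤ K)
    {μ : Measure X} {ν : Measure 𝒴} [IsFiniteMeasure μ] [IsFiniteMeasure ν]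
    (hμ : ∀ y, ∫ x, ξ x y ∂μ = 1) (hν : ∀ x, ∫ y, ξ x y ∂ν = 1)
    {γ₁ : SignedMeasure X} {γ₂ : SignedMeasure 𝒴} (hγ₁ : γ₁ Set.univ = 0)
    (hγ₂ : γ₂ Set.univ = 0) (t : ℝ) :
    signedIntegral (μ.toSignedMeasure + t • γ₁) (fun x =>
        signedIntegral (ν.toSignedMeasure + t • γ₂) (ξ x))
      = μ.real Set.univ + t ^ 2 * signedIntegral γ₁ (fun x => signedIntegral γ₂ (ξ x)) := by
  set g := fun x => signedIntegral γ₂ (ξ x)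
  have hξ (x : X) (κ : Measure 𝒴) [IsFiniteMeasure κ] : Integrable (ξ x) κ :=
    integrable_of_abs_le (hξm.comp_measurable measurable_prodMk_left) (hK x) κ
  have hg (κ : Measure X) [IsFiniteMeasure κ] : Integrable g κ :=
    integrable_of_abs_le (hξm.signedIntegral_prod_right γ₂)
      (fun x => abs_signedIntegral_le γ₂ (hK x)) κ
  have hg_mean : ∫ x, g x ∂μ = 0 := by
    rw [integral_signedIntegral_swap μ γ₂
      (fun κ _ => integrable_of_abs_le hξm (fun p => hK p.1 p.2) _)]
    simp only [hμ, signedIntegral_const, hγ₂, zero_mul]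
  have hinner (x : X) : signedIntegral (ν.toSignedMeasure + t • γ₂) (ξ x) = 1 + t * g x := by
    rw [signedIntegral_toSignedMeasure_add_smul ν t γ₂ (hξ x), hν]
  have hF (κ : Measure X) [IsFiniteMeasure κ] : Integrable (fun x => 1 + t * g x) κ :=
    (integrable_const 1).add ((hg κ).const_mul t)
  simp only [hinner]
  rw [signedIntegral_toSignedMeasure_add_smul μ t γ₁ hF, signedIntegral_const_add_mul γ₁ 1 t hg,
    integral_add (integrable_const 1) ((hg μ).const_mul t), integral_const_mul, hg_mean, hγ₁,
    integral_const, smul_eq_mul]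
  ring

end SignedIntegral

section Gibbs

variable {𝒴 : Type*} (ε : ℝ) {φ₁ φ₀ : 𝒴 → ℝ} {c : 𝒴 × 𝒴 → ℝ}

lemma measurable_gibbsDensity [MeasurableSpace 𝒴] (hφ₁ : Measurable φ₁) (hφ₀ : Measurable φ₀)
    (hc : Measurable c) : Measurable (Function.uncurry (gibbsDensity ε φ₁ φ₀ c)) := by
  unfold gibbsDensity
  fun_prop

lemma exists_abs_gibbsDensity_le (hφ₁ : ∃ C, ∀ y, |φ₁ y| ≤ C) (hφ₀ : ∃ C, ∀ y, |φ₀ y| ≤ C)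
    (hc : ∃ C, ∀ p, |c p| ≤ C) : ∃ K, ∀ y₁ y₂, |gibbsDensity ε φ₁ φ₀ c y₁ y₂| ≤ K := by
  obtain ⟨C₁, hC₁⟩ := hφ₁
  obtain ⟨C₀, hC₀⟩ := hφ₀
  obtain ⟨C, hC⟩ := hc
  refine ⟨Real.exp ((C₁ + C₀ + C) / |ε|), fun y₁ y₂ => ?_⟩
  have hexponent : |φ₁ y₁ + φ₀ y₂ - c (y₁, y₂)| ≤ C₁ + C₀ + C :=
    (abs_sub _ _).trans (add_le_add ((abs_add_le _ _).trans (add_le_add (hC₁ y₁) (hC₀ y₂)))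
      (hC (y₁, y₂)))
  rw [gibbsDensity, Real.abs_exp, Real.exp_le_exp]
  calc _ ≤ |(φ₁ y₁ + φ₀ y₂ - c (y₁, y₂)) / ε| := le_abs_self _
    _ ≤ (C₁ + C₀ + C) / |ε| := by rw [abs_div]; gcongr

end Gibbs

theorem entropicDual_quadratic_expansion_general
    {𝒴 : Type*} [MeasurableSpace 𝒴]
    (ε : ℝ)
    (φ₁ φ₀ : 𝒴 → ℝ) (c : 𝒴 × 𝒴 → ℝ)
    (hφ₁m : Measurable φ₁) (hφ₀m : Measurable φ₀) (hcm : Measurable c)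
    (hφ₁b : ∃ C, ∀ y, |φ₁ y| ≤ C) (hφ₀b : ∃ C, ∀ y, |φ₀ y| ≤ C)
    (hcb : ∃ C, ∀ p, |c p| ≤ C)
    (μ ν : Measure 𝒴) [IsProbabilityMeasure μ] [IsProbabilityMeasure ν]
    (hμnorm : ∀ y₂, ∫ y₁, gibbsDensity ε φ₁ φ₀ c y₁ y₂ ∂μ = 1)
    (hνnorm : ∀ y₁, ∫ y₂, gibbsDensity ε φ₁ φ₀ c y₁ y₂ ∂ν = 1)
    (γ₁ γ₂ : SignedMeasure 𝒴)
    (hγ₁ : γ₁ Set.univ = 0) (hγ₂ : γ₂ Set.univ = 0)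
    (t : ℝ) :
    entropicDual ε φ₁ φ₀ c (μ.toSignedMeasure + t • γ₁) (ν.toSignedMeasure + t • γ₂)
      = entropicDual ε φ₁ φ₀ c μ.toSignedMeasure ν.toSignedMeasure
        + t * (signedIntegral γ₁ φ₁ + signedIntegral γ₂ φ₀)
        - t^2 * ε * signedIntegral γ₁ (fun y₁ => signedIntegral γ₂ (fun y₂ =>
            gibbsDensity ε φ₁ φ₀ c y₁ y₂)) := by
  have hξm := (measurable_gibbsDensity ε hφ₁m hφ₀m hcm).stronglyMeasurable
  obtain ⟨K, hK⟩ := exists_abs_gibbsDensity_le ε hφ₁b hφ₀b hcb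
  have hφ₁ := integrable_of_abs_le hφ₁m.stronglyMeasurable hφ₁b.choose_spec
  have hφ₀ := integrable_of_abs_le hφ₀m.stronglyMeasurable hφ₀b.choose_spec
  have hexpand := signedIntegral_signedIntegral_add_smul hξm hK hμnorm hνnorm hγ₁ hγ₂
  have hexpand₀ := hexpand 0
  simp only [zero_smul, add_zero, zero_pow two_ne_zero, zero_mul] at hexpand₀
  simp only [entropicDual, signedIntegral_add _ _ hφ₁, signedIntegral_add _ _ hφ₀,
    signedIntegral_smul, hexpand t, hexpand₀]
  ring

/-- Exact quadratic expansion of the entropic dual functional.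
Let `φ₁, φ₀, c` be bounded measurable, `ε > 0`, and `ξ` the Gibbs density.  If `μ, ν`
are probability measures on `𝒴` satisfying the marginal normalization conditions
`∫ ξ(·, y₂) dμ = 1` and `∫ ξ(y₁, ·) dν = 1`, then for all balanced finite signed
measures `γ₁, γ₂` and all `t ∈ ℝ`:
`D(μ + tγ₁, ν + tγ₂) = D(μ, ν) + t (∫ φ₁ dγ₁ + ∫ φ₀ dγ₂) − t² ε ∫∫ ξ dγ₁ dγ₂`. -/
theorem entropicDual_quadratic_expansion
    {𝒴 : Type*} [MeasurableSpace 𝒴]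
    (ε : ℝ) (hε : 0 < ε)
    (φ₁ φ₀ : 𝒴 → ℝ) (c : 𝒴 × 𝒴 → ℝ)
    (hφ₁m : Measurable φ₁) (hφ₀m : Measurable φ₀) (hcm : Measurable c)
    (hφ₁b : ∃ C, ∀ y, |φ₁ y| ≤ C) (hφ₀b : ∃ C, ∀ y, |φ₀ y| ≤ C)
    (hcb : ∃ C, ∀ p, |c p| ≤ C)
    (μ ν : Measure 𝒴) [IsProbabilityMeasure μ] [IsProbabilityMeasure ν]
    (hμnorm : ∀ y₂, ∫ y₁, gibbsDensity ε φ₁ φ₀ c y₁ y₂ ∂μ = 1)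
    (hνnorm : ∀ y₁, ∫ y₂, gibbsDensity ε φ₁ φ₀ c y₁ y₂ ∂ν = 1)
    (γ₁ γ₂ : SignedMeasure 𝒴)
    (hγ₁ : γ₁ Set.univ = 0) (hγ₂ : γ₂ Set.univ = 0)
    (t : ℝ) :
    entropicDual ε φ₁ φ₀ c (μ.toSignedMeasure + t • γ₁) (ν.toSignedMeasure + t • γ₂)
      = entropicDual ε φ₁ φ₀ c μ.toSignedMeasure ν.toSignedMeasure
        + t * (signedIntegral γ₁ φ₁ + signedIntegral γ₂ φ₀)
        - t^2 * ε * signedIntegral γ₁ (fun y₁ => signedIntegral γ₂ (fun y₂ =>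
            gibbsDensity ε φ₁ φ₀ c y₁ y₂)) :=
  entropicDual_quadratic_expansion_general ε φ₁ φ₀ c hφ₁m hφ₀m hcm hφ₁b hφ₀b hcb μ ν hμnorm hνnorm
    γ₁ γ₂ hγ₁ hγ₂ t
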